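/- arXiv:1311.3679 — 2 statements merged into one kernel-verified Lean document; each statement's English description precedes it below -/
import Mathlib

section
/- Let X be a topological space and 𝒰 an open cover of X. There exists a 𝒰-small partition of unity on X if and only if there is a sequence of open covers 𝒰₁, 𝒰₂, … of X with 𝒰₁ = 𝒰 such that 𝒰_{n+1} is a star refinement of 𝒰_n for every n. -/
noncomputable section
open Set Topology TopologicalSpace

/-- `𝒰` is an open cover of `X`. -/
def IsOpenCover {X : Type} [TopologicalSpace X] (𝒰 : Set (Set X)) : Prop :=
  (∀ U ∈ 𝒰, IsOpen U) ∧ ⋃₀ 𝒰 = univ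

/-- Star of a point with respect to a family of sets. -/
def ptStar {X : Type} (x : X) (𝒰 : Set (Set X)) : Set X := ⋃₀ {U | U ∈ 𝒰 ∧ x ∈ U}

/-- Star of a set with respect to a family of sets. -/
def setStar {X : Type} (A : Set X) (𝒰 : Set (Set X)) : Set X :=
  ⋃₀ {U | U ∈ 𝒰 ∧ (U ∩ A).Nonempty}

/-- `𝒱` star-refines `𝒰`. -/
def StarRefines {X : Type} (𝒱 𝒰 : Set (Set X)) : Prop :=
  ∀ x : X, ∃ U ∈ 𝒰, ptStar x 𝒱 ⊆ U

/-- A continuous partition of unity viewed as a map into `l¹(S)` with image in `Δ(S)`. -/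
def IsPU {X S : Type} [TopologicalSpace X] (f : X → lp (fun _ : S => ℝ) 1) : Prop :=
  Continuous f ∧ ∀ x : X, (∀ s : S, 0 ≤ f x s) ∧ HasSum (fun s => f x s) 1

/-- The partition of unity `f` is `𝒰`-small: each carrier lies in a member of `𝒰`. -/
def IsUSmall {X S : Type} [TopologicalSpace X] (𝒰 : Set (Set X))
    (f : X → lp (fun _ : S => ℝ) 1) : Prop :=
  ∀ s : S, ∃ U ∈ 𝒰, {x : X | f x s ≠ 0} ⊆ U

/-- There exists a `𝒰`-small partition of unity on `X`. -/
def ExistsUSmallPU {X : Type} [TopologicalSpace X] (𝒰 : Set (Set X)) : Prop :=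
  ∃ (S : Type) (f : X → lp (fun _ : S => ℝ) 1), IsPU f ∧ IsUSmall 𝒰 f

/-- An indexed family of sets is discrete. -/
def DiscreteFam {X S : Type} [TopologicalSpace X] (A : S → Set X) : Prop :=
  ∀ x : X, ∃ N ∈ nhds x, {s : S | (A s ∩ N).Nonempty}.Subsingleton

/-- A family of sets (as a set of sets) is discrete. -/
def DiscreteSetFam {X : Type} [TopologicalSpace X] (𝒜 : Set (Set X)) : Prop :=
  ∀ x : X, ∃ N ∈ nhds x, {A | A ∈ 𝒜 ∧ (A ∩ N).Nonempty}.Subsingleton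

/-- `𝒰` has a σ-discrete closed refinement. -/
def HasSigmaDiscreteClosedRefinement {X : Type} [TopologicalSpace X]
    (𝒰 : Set (Set X)) : Prop :=
  ∃ D : ℕ → Set (Set X), (∀ n, DiscreteSetFam (D n)) ∧
    (∀ n, ∀ F ∈ D n, IsClosed F) ∧
    (∀ n, ∀ F ∈ D n, ∃ U ∈ 𝒰, F ⊆ U) ∧
    ⋃₀ (⋃ n, D n) = univ

/-- `X` is collectionwise normal. -/
def CwNormal (X : Type) [TopologicalSpace X] : Prop :=
  ∀ (S : Type) (A : S → Set X), (∀ s, IsClosed (A s)) → DiscreteFam A →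
    ∃ V : S → Set X, (∀ s, IsOpen (V s)) ∧ (∀ s, A s ⊆ V s) ∧ DiscreteFam V

/-! A `𝒰`-small partition of unity `f : X → ℓ¹(S)` makes `X` pseudometric via `‖f x - f y‖`.
The radius `r x = (⨆ s, f x s) / 2` is positive and 1-Lipschitz, each ball of radius `r x` about
`x` lies in the carrier of a single `f s`, and the covers by balls of radius `4⁻ⁿ r x` star-refine
each other.

Conversely, the relations "`x` and `y` lie in a common member of `𝒰ₙ`" form a countable base of a
uniformity whose topology is coarser than that of `X`. This uniformity is pseudometrizable, hence
paracompact and normal, so its open cover by interiors of stars with respect to `𝒰₁` admits a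
subordinate partition of unity, which pulls back to a `𝒰`-small one on `X`. -/

namespace PartitionOfUnity

variable {ι X : Type} [TopologicalSpace X]

open Classical in
def toLp (ρ : PartitionOfUnity ι X univ) (x : X) : lp (fun _ : ι => ℝ) 1 :=
  ∑ᶠ i, ρ i x • lp.single 1 i 1

theorem toLp_apply (ρ : PartitionOfUnity ι X univ) (x : X) (j : ι) : ρ.toLp x j = ρ j x := by
  classical
  obtain ⟨I, hI⟩ := (ρ.locallyFinite.point_finite x).exists_finset_coe
  have hsupp : (Function.support fun i => ρ i x • lp.single 1 i (1 : ℝ)) ⊆ I :=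
    hI ▸ Function.support_smul_subset_left (fun i => ρ i x) _
  rw [toLp, finsum_eq_sum_of_support_subset _ hsupp, lp.coeFn_sum, Finset.sum_apply]
  simp only [lp.coeFn_smul, lp.coeFn_single, Pi.smul_apply, Pi.single_apply, smul_eq_mul,
    mul_ite, mul_one, mul_zero, Finset.sum_ite_eq]
  split_ifs with hj
  · rfl
  · exact (Function.notMem_support.1 fun h => hj (hI ▸ h : j ∈ (I : Set ι))).symm

theorem hasSum_apply (ρ : PartitionOfUnity ι X univ) (x : X) : HasSum (fun i => ρ i x) 1 := by
  obtain ⟨I, hI⟩ := (ρ.locallyFinite.point_finite x).exists_finset_coe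
  have hsupp : Function.support (fun i => ρ i x) ⊆ I := hI.ge
  rw [← ρ.sum_eq_one (mem_univ x), finsum_eq_sum_of_support_subset _ hsupp]
  exact hasSum_sum_of_ne_finset_zero fun i hi => Function.notMem_support.1 fun h => hi (hsupp h)

theorem continuous_toLp (ρ : PartitionOfUnity ι X univ) : Continuous ρ.toLp :=
  ρ.continuous_finsum_smul fun _ _ _ => continuousAt_const

theorem isPU_toLp (ρ : PartitionOfUnity ι X univ) : IsPU ρ.toLp := by
  refine ⟨ρ.continuous_toLp, fun x => ⟨fun i => ?_, ?_⟩⟩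
  · rw [toLp_apply]; exact ρ.nonneg i x
  · simpa only [toLp_apply] using ρ.hasSum_apply x

end PartitionOfUnity

theorem existsUSmallPU_of_isOpenCover {Y : Type} [TopologicalSpace Y] [NormalSpace Y]
    [ParacompactSpace Y] {𝒱 : Set (Set Y)} (h𝒱 : IsOpenCover 𝒱) : ExistsUSmallPU 𝒱 := by
  obtain ⟨ρ, hρ⟩ := PartitionOfUnity.exists_isSubordinate isClosed_univ (fun V : 𝒱 => (V : Set Y))
    (fun V => h𝒱.1 V V.2) (by rw [← sUnion_eq_iUnion, h𝒱.2])
  refine ⟨𝒱, ρ.toLp, ρ.isPU_toLp, fun V => ⟨V, V.2, fun y hy => hρ V (subset_tsupport _ ?_)⟩⟩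
  rwa [mem_ofPred_eq, ρ.toLp_apply] at hy

theorem ExistsUSmallPU.of_continuous {X Y : Type} [TopologicalSpace X] [TopologicalSpace Y]
    {φ : X → Y} (hφ : Continuous φ) {𝒰 : Set (Set X)} {𝒱 : Set (Set Y)} (h𝒱 : ExistsUSmallPU 𝒱)
    (hrefine : ∀ V ∈ 𝒱, ∃ U ∈ 𝒰, φ ⁻¹' V ⊆ U) : ExistsUSmallPU 𝒰 := by
  obtain ⟨S, f, ⟨hf, hf_nonneg⟩, hsmall⟩ := h𝒱
  refine ⟨S, f ∘ φ, ⟨hf.comp hφ, fun x => hf_nonneg (φ x)⟩, fun s => ?_⟩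
  obtain ⟨V, hV, hfV⟩ := hsmall s
  obtain ⟨U, hU, hVU⟩ := hrefine V hV
  exact ⟨U, hU, fun x hx => hVU (hfV hx)⟩

structure NormalSequence (X : Type) where
  cover : ℕ → Set (Set X)
  sUnion_cover : ∀ n, ⋃₀ cover n = univ
  starRefines : ∀ n, StarRefines (cover (n + 1)) (cover n)

namespace NormalSequence

open Filter Uniformity

variable {X : Type} (𝒮 : NormalSequence X)

def entourage (n : ℕ) : SetRel X X := {p | ∃ A ∈ 𝒮.cover n, p.1 ∈ A ∧ p.2 ∈ A}

theorem mem_entourage_self (n : ℕ) (x : X) : (x, x) ∈ 𝒮.entourage n := by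
  obtain ⟨A, hA, hxA⟩ := (𝒮.sUnion_cover n).ge (mem_univ x)
  exact ⟨A, hA, hxA, hxA⟩

theorem swap_mem_entourage {n : ℕ} {p : X × X} (hp : p ∈ 𝒮.entourage n) :
    p.swap ∈ 𝒮.entourage n :=
  let ⟨A, hA, h₁, h₂⟩ := hp; ⟨A, hA, h₂, h₁⟩

open SetRel in
theorem entourage_comp_subset (n : ℕ) :
    𝒮.entourage (n + 1) ○ 𝒮.entourage (n + 1) ⊆ 𝒮.entourage n := by
  rintro ⟨x, z⟩ ⟨y, ⟨A, hA, hxA, hyA⟩, ⟨B, hB, hyB, hzB⟩⟩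
  obtain ⟨C, hC, hstar⟩ := 𝒮.starRefines n y
  exact ⟨C, hC, hstar ⟨A, ⟨hA, hyA⟩, hxA⟩, hstar ⟨B, ⟨hB, hyB⟩, hzB⟩⟩

theorem antitone_entourage : Antitone 𝒮.entourage := by
  refine antitone_nat_of_succ_le fun n p hp => 𝒮.entourage_comp_subset n ?_
  exact ⟨p.2, hp, 𝒮.mem_entourage_self _ _⟩

theorem ball_entourage (n : ℕ) (x : X) :
    UniformSpace.ball x (𝒮.entourage n) = ptStar x (𝒮.cover n) := by
  ext y
  simp only [UniformSpace.ball, entourage, ptStar, mem_preimage, mem_ofPred_eq, mem_sUnion]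
  constructor <;> rintro ⟨A, h₁, h₂⟩ <;> exact ⟨A, by tauto⟩

theorem hasAntitoneBasis_iInf_entourage :
    (⨅ n, 𝓟 (𝒮.entourage n : Set (X × X))).HasAntitoneBasis 𝒮.entourage :=
  .iInf_principal 𝒮.antitone_entourage

def WithUniformity (_ : NormalSequence X) : Type := X

instance : UniformSpace 𝒮.WithUniformity :=
  have hb := 𝒮.hasAntitoneBasis_iInf_entourage
  .ofCore <| .mk' (⨅ n, 𝓟 (𝒮.entourage n))
    (fun _ hr x => let ⟨n, hn⟩ := hb.mem_iff.1 hr; hn (𝒮.mem_entourage_self n x))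
    (fun _ hr => let ⟨n, hn⟩ := hb.mem_iff.1 hr
      hb.mem_iff.2 ⟨n, fun _ hp => hn (𝒮.swap_mem_entourage hp)⟩)
    (fun _ hr => let ⟨n, hn⟩ := hb.mem_iff.1 hr
      ⟨_, hb.mem (n + 1), (𝒮.entourage_comp_subset n).trans hn⟩)

theorem hasAntitoneBasis_uniformity :
    (𝓤 𝒮.WithUniformity).HasAntitoneBasis 𝒮.entourage :=
  𝒮.hasAntitoneBasis_iInf_entourage

instance : IsCountablyGenerated (𝓤 𝒮.WithUniformity) :=
  𝒮.hasAntitoneBasis_uniformity.isCountablyGenerated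

instance : ParacompactSpace 𝒮.WithUniformity :=
  letI := UniformSpace.pseudoMetricSpace 𝒮.WithUniformity
  inferInstance

theorem hasBasis_nhds (x : 𝒮.WithUniformity) :
    (𝓝 x).HasBasis (fun _ => True) fun n => ptStar x (𝒮.cover n) :=
  (nhds_basis_uniformity' 𝒮.hasAntitoneBasis_uniformity.toHasBasis).congr (fun _ => Iff.rfl)
    fun n _ => 𝒮.ball_entourage n x

def toWithUniformity : X → 𝒮.WithUniformity := id

theorem continuous_toWithUniformity [TopologicalSpace X]
    (hopen : ∀ n, ∀ A ∈ 𝒮.cover n, IsOpen A) : Continuous 𝒮.toWithUniformity := by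
  refine continuous_iff_continuousAt.2 fun x =>
    (𝒮.hasBasis_nhds x).tendsto_right_iff.2 fun n _ => ?_
  obtain ⟨A, hA, hxA⟩ := (𝒮.sUnion_cover n).ge (mem_univ x)
  filter_upwards [(hopen n A hA).mem_nhds hxA] with y hy using ⟨A, ⟨hA, hxA⟩, hy⟩

theorem existsUSmallPU [TopologicalSpace X] (hopen : ∀ n, ∀ A ∈ 𝒮.cover n, IsOpen A) :
    ExistsUSmallPU (𝒮.cover 0) := by
  let 𝒱 : Set (Set 𝒮.WithUniformity) :=
    {V | IsOpen V ∧ ∃ U ∈ 𝒮.cover 0, 𝒮.toWithUniformity ⁻¹' V ⊆ U}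
  have h𝒱 : IsOpenCover 𝒱 := by
    refine ⟨fun V hV => hV.1, eq_univ_of_forall fun x => ?_⟩
    obtain ⟨U, hU, hstar⟩ := 𝒮.starRefines 0 x
    -- `𝒮.WithUniformity` unfolds to `X`, so the space of `interior_subset` has to be pinned.
    refine ⟨interior (ptStar x (𝒮.cover 1) : Set 𝒮.WithUniformity), ⟨isOpen_interior, U, hU,
      fun y hy => hstar (interior_subset (X := 𝒮.WithUniformity) hy)⟩, ?_⟩
    exact mem_interior_iff_mem_nhds.2 ((𝒮.hasBasis_nhds x).mem_of_mem trivial)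
  have hPU : ExistsUSmallPU 𝒱 := existsUSmallPU_of_isOpenCover h𝒱
  exact hPU.of_continuous (𝒮.continuous_toWithUniformity hopen) fun V hV => hV.2

end NormalSequence

namespace lp

variable {S : Type} {p : ENNReal}

theorem apply_le_norm (hp : p ≠ 0) (g : lp (fun _ : S => ℝ) p) (s : S) : g s ≤ ‖g‖ :=
  (le_abs_self _).trans (norm_apply_le_norm hp g s)

theorem bddAbove_range (hp : p ≠ 0) (g : lp (fun _ : S => ℝ) p) : BddAbove (range g) :=
  ⟨‖g‖, forall_mem_range.2 (apply_le_norm hp g)⟩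

theorem iSup_le_iSup_add_norm_sub (hp : p ≠ 0) (g h : lp (fun _ : S => ℝ) p) :
    ⨆ s, g s ≤ (⨆ s, h s) + ‖g - h‖ := by
  rcases isEmpty_or_nonempty S with hS | hS
  · simpa only [Real.iSup_of_isEmpty, zero_add] using lp.norm_nonneg' (g - h)
  · refine ciSup_le fun s => ?_
    have hgh := apply_le_norm hp (g - h) s
    rw [lp.coeFn_sub, Pi.sub_apply] at hgh
    linarith [le_ciSup (bddAbove_range hp h) s]

end lp

section StarRefiningBalls

open Metric

variable {X Y : Type} [PseudoMetricSpace Y] {φ : X → Y} {r : X → ℝ}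

theorem ptStar_range_preimage_ball_subset (hr : ∀ x, 0 < r x)
    (hlip : ∀ x y, r x ≤ r y + dist (φ x) (φ y)) {δ : ℝ} (hδ : δ ≤ 1 / 2) (y : X) :
    ptStar y (range fun x => φ ⁻¹' ball (φ x) (δ * r x)) ⊆ φ ⁻¹' ball (φ y) (4 * δ * r y) := by
  rintro z ⟨_, ⟨⟨x, rfl⟩, hy⟩, hz⟩
  rw [mem_preimage, mem_ball, dist_comm] at hy
  rw [mem_preimage, mem_ball] at hz ⊢
  have hδ₀ : 0 < δ := pos_of_mul_pos_left ((dist_nonneg).trans_lt hy) (hr x).le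
  have hrx : r x ≤ 2 * r y := by nlinarith [hlip x y, hr x]
  calc dist (φ z) (φ y) ≤ dist (φ z) (φ x) + dist (φ x) (φ y) := dist_triangle _ _ _
    _ < δ * r x + δ * r x := add_lt_add hz hy
    _ ≤ 4 * δ * r y := by nlinarith

theorem exists_starRefining_seq_of_preimage_ball [TopologicalSpace X] (hφ : Continuous φ)
    (hr : ∀ x, 0 < r x) (hlip : ∀ x y, r x ≤ r y + dist (φ x) (φ y)) {𝒰 : Set (Set X)}
    (h𝒰 : IsOpenCover 𝒰)
    (hball : ∀ x, ∃ U ∈ 𝒰, φ ⁻¹' ball (φ x) (r x) ⊆ U) :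
    ∃ U : ℕ → Set (Set X), U 0 = 𝒰 ∧ (∀ n, IsOpenCover (U n)) ∧
      ∀ n, StarRefines (U (n + 1)) (U n) := by
  set B : ℕ → X → Set X := fun n x => φ ⁻¹' ball (φ x) ((4 : ℝ)⁻¹ ^ n * r x)
  have hstar (n : ℕ) (y : X) : ptStar y (range (B (n + 1))) ⊆ B n y := by
    convert ptStar_range_preimage_ball_subset hr hlip (δ := 4⁻¹ ^ (n + 1)) ?_ y using 4
    · rw [pow_succ]; ring
    · calc (4 : ℝ)⁻¹ ^ (n + 1) ≤ 4⁻¹ := pow_le_of_le_one (by norm_num) (by norm_num) n.succ_ne_zero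
        _ ≤ 1 / 2 := by norm_num
  refine ⟨fun | 0 => 𝒰 | n + 1 => range (B (n + 1)), rfl, ?_, ?_⟩
  · rintro (_ | n)
    · exact h𝒰
    · refine ⟨?_, eq_univ_of_forall fun x => ⟨B (n + 1) x, mem_range_self x, ?_⟩⟩
      · rintro _ ⟨x, rfl⟩
        exact isOpen_ball.preimage hφ
      · simpa [B] using hr x
  · rintro (_ | n) y
    · obtain ⟨U, hU, hBU⟩ := hball y
      exact ⟨U, hU, (hstar 0 y).trans (by simpa [B] using hBU)⟩
    · exact ⟨B (n + 1) y, mem_range_self y, hstar (n + 1) y⟩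

end StarRefiningBalls

namespace IsPU

open Metric

variable {X S : Type} [TopologicalSpace X] {f : X → lp (fun _ : S => ℝ) 1}

theorem exists_pos (hf : IsPU f) (x : X) : ∃ s, 0 < f x s := by
  by_contra! h
  have hzero : ∀ s, f x s = 0 := fun s => le_antisymm (h s) ((hf.2 x).1 s)
  exact one_ne_zero <| (hf.2 x).2.unique (by simpa only [hzero] using hasSum_zero)

theorem exists_starRefining_seq (hf : IsPU f) {𝒰 : Set (Set X)} (h𝒰 : IsOpenCover 𝒰)
    (hsmall : IsUSmall 𝒰 f) :
    ∃ U : ℕ → Set (Set X), U 0 = 𝒰 ∧ (∀ n, IsOpenCover (U n)) ∧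
      ∀ n, StarRefines (U (n + 1)) (U n) := by
  have hsup_pos (x : X) : 0 < ⨆ s, f x s :=
    let ⟨s, hs⟩ := hf.exists_pos x
    hs.trans_le (le_ciSup (lp.bddAbove_range one_ne_zero _) s)
  refine exists_starRefining_seq_of_preimage_ball (r := fun x => (⨆ s, f x s) / 2) hf.1
    (fun x => half_pos (hsup_pos x)) (fun x y => ?_) h𝒰 fun x => ?_
  · rw [dist_eq_norm]
    linarith [lp.iSup_le_iSup_add_norm_sub one_ne_zero (f x) (f y), norm_nonneg (f x - f y)]
  · have : Nonempty S := let ⟨s, _⟩ := hf.exists_pos x; ⟨s⟩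
    obtain ⟨s, hs⟩ := exists_lt_of_lt_ciSup (half_lt_self (hsup_pos x))
    obtain ⟨U, hU, hsU⟩ := hsmall s
    refine ⟨U, hU, fun y hy => hsU ?_⟩
    rw [mem_preimage, mem_ball, dist_comm, dist_eq_norm] at hy
    have hxy := lp.apply_le_norm one_ne_zero (f x - f y) s
    rw [lp.coeFn_sub, Pi.sub_apply] at hxy
    exact (by linarith : 0 < f y s).ne'

end IsPU

/-- A `𝒰`-small partition of unity exists iff there is a sequence of open covers starting
with `𝒰` in which each cover star-refines the previous one. -/
theorem stmt3 (X : Type) [TopologicalSpace X] (𝒰 : Set (Set X)) (h : IsOpenCover 𝒰) :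
    ExistsUSmallPU 𝒰 ↔
      ∃ U : ℕ → Set (Set X), U 0 = 𝒰 ∧ (∀ n, IsOpenCover (U n)) ∧
        ∀ n, StarRefines (U (n + 1)) (U n) := by
  constructor
  · rintro ⟨S, f, hf, hsmall⟩
    exact hf.exists_starRefining_seq h hsmall
  · rintro ⟨U, rfl, hcov, hstar⟩
    exact NormalSequence.existsUSmallPU ⟨U, fun n => (hcov n).2, hstar⟩ fun n => (hcov n).1
end
end

section
/- Let X be a collectionwise normal space and 𝒰 an open cover of X. Then 𝒰 admits a 𝒰-small partition of unity if and only if 𝒰 has a point-finite open refinement. -/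
/-!
(⇒) If `f` is a `𝒰`-small partition of unity and `m x = sup_s f x s`, the sets
`{x | m x / 2 < f x s}` are open, cover `X` and lie in members of `𝒰`; a point lies in only
finitely many of them because `s ↦ f x s` is summable.

(⇐) Let `𝒱` be a point-finite open refinement and call the number of members of `𝒱` containing `x`
its order. Given an open `G` containing the points of order `≤ n`, the points of order `n + 1`
outside `G` split according to their set of members `T`; since the intersection of the members at
a point is an open neighbourhood of it, the closures of these pieces form a discrete closed family,
and collectionwise normality expands it to a discrete open family refining `𝒱`. Recursion on `n`
gives a σ-discrete open refinement `W n i` with a closed shrinking `A n i` that covers `X`.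
Urysohn functions for `A n i ⊆ W n i`, weighted by `2⁻¹ ^ n`, assemble into a continuous nowhere
vanishing map into `ℓ¹`, and normalizing it gives the partition of unity.
-/

noncomputable section
open Set Topology TopologicalSpace

open Function

namespace DiscreteFam

variable {X ι : Type} [TopologicalSpace X] {A B : ι → Set X}

theorem mono (hB : DiscreteFam B) (hAB : ∀ i, A i ⊆ B i) : DiscreteFam A := fun x ↦
  let ⟨N, hN, hsub⟩ := hB x
  ⟨N, hN, hsub.anti fun _ ⟨y, hyA, hyN⟩ ↦ ⟨y, hAB _ hyA, hyN⟩⟩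

theorem comp_injective {κ : Type} (hA : DiscreteFam A) {e : κ → ι} (he : e.Injective) :
    DiscreteFam (A ∘ e) := fun x ↦
  let ⟨N, hN, hsub⟩ := hA x
  ⟨N, hN, hsub.preimage he⟩

theorem subsingleton_setOf_mem (hA : DiscreteFam A) (x : X) : {i | x ∈ A i}.Subsingleton :=
  let ⟨_, hN, hsub⟩ := hA x
  hsub.anti fun _ hi ↦ ⟨x, hi, mem_of_mem_nhds hN⟩

theorem locallyFinite (hA : DiscreteFam A) : LocallyFinite A := fun x ↦
  let ⟨N, hN, hsub⟩ := hA x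
  ⟨N, hN, hsub.finite.subset fun _ ⟨y, hy⟩ ↦ ⟨y, hy.1, hy.2⟩⟩

end DiscreteFam

theorem CwNormal.normalSpace {X : Type} [TopologicalSpace X] (hX : CwNormal X) :
    NormalSpace X := by
  refine ⟨fun s t hs ht hst ↦ ?_⟩
  have hdisc : DiscreteFam fun b ↦ cond b s t := by
    intro x
    by_cases hx : x ∈ s
    · refine ⟨tᶜ, ht.isOpen_compl.mem_nhds (disjoint_left.1 hst hx),
        subsingleton_singleton.anti (t := {true}) ?_⟩
      rintro (_ | _) ⟨y, hyt, hyN⟩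
      exacts [(hyN hyt).elim, rfl]
    · refine ⟨sᶜ, hs.isOpen_compl.mem_nhds hx, subsingleton_singleton.anti (t := {false}) ?_⟩
      rintro (_ | _) ⟨y, hys, hyN⟩
      exacts [rfl, (hyN hys).elim]
  obtain ⟨V, hVo, hAV, hVd⟩ := hX Bool _ (Bool.forall_bool.2 ⟨ht, hs⟩) hdisc
  refine ⟨V true, V false, hVo _, hVo _, hAV true, hAV false, disjoint_left.2 fun x ht hf ↦ ?_⟩
  exact Bool.noConfusion (hVd.subsingleton_setOf_mem x ht hf)

theorem CwNormal.exists_discrete_shrinking {X ι : Type} [TopologicalSpace X] (hX : CwNormal X)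
    {C O : ι → Set X} (hC : ∀ i, IsClosed (C i)) (hCd : DiscreteFam C) (hO : ∀ i, IsOpen (O i))
    (hCO : ∀ i, C i ⊆ O i) :
    ∃ W A : ι → Set X, (∀ i, IsOpen (W i)) ∧ (∀ i, IsClosed (A i)) ∧
      (∀ i, C i ⊆ interior (A i)) ∧ (∀ i, A i ⊆ W i) ∧ (∀ i, W i ⊆ O i) ∧ DiscreteFam W := by
  have := hX.normalSpace
  obtain ⟨W₀, hW₀, hCW₀, hW₀d⟩ := hX ι C hC hCd
  have hW : ∀ i, IsOpen (W₀ i ∩ O i) := fun i ↦ (hW₀ i).inter (hO i)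
  choose U hU hCU hUW using fun i ↦
    normal_exists_closure_subset (hC i) (hW i) (subset_inter (hCW₀ i) (hCO i))
  exact ⟨fun i ↦ W₀ i ∩ O i, fun i ↦ closure (U i), hW, fun i ↦ isClosed_closure,
    fun i ↦ (hCU i).trans (interior_maximal subset_closure (hU i)), hUW,
    fun i ↦ inter_subset_right, hW₀d.mono fun i ↦ inter_subset_left⟩

section SequenceSpace

variable {S : Type}

theorem bddAbove_range_lp {p : ENNReal} (hp : p ≠ 0) (u : lp (fun _ : S ↦ ℝ) p) :
    BddAbove (range ⇑u) :=
  ⟨‖u‖, forall_mem_range.2 fun s ↦ (le_abs_self _).trans (lp.norm_apply_le_norm hp u s)⟩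

theorem lipschitzWith_one_iSup_lp {p : ENNReal} [Fact (1 ≤ p)] :
    LipschitzWith 1 fun u : lp (fun _ : S ↦ ℝ) p ↦ ⨆ s, u s := by
  have hp : p ≠ 0 := (zero_lt_one.trans_le Fact.out).ne'
  refine .of_le_add fun u v ↦ ?_
  rcases isEmpty_or_nonempty S with _ | _
  · simp [Real.iSup_of_isEmpty]
  refine ciSup_le fun s ↦ ?_
  have hdist : dist (u s) (v s) ≤ dist u v := by
    simpa using (lp.lipschitzWith_one_eval p s).dist_le_mul u v
  calc u s ≤ v s + dist (u s) (v s) := by linarith [Real.sub_le_dist (u s) (v s)]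
    _ ≤ (⨆ s, v s) + dist u v := add_le_add (le_ciSup (bddAbove_range_lp hp v) s) hdist

theorem Summable.finite_setOf_lt {f : S → ℝ} (hf : Summable f) {ε : ℝ} (hε : 0 < ε) :
    {s | ε < f s}.Finite := by
  simpa using Filter.eventually_cofinite.1 (hf.tendsto_cofinite_zero.eventually_le_const hε)

variable {X : Type} [TopologicalSpace X]

theorem lp.hasSum_abs_one (u : lp (fun _ : S ↦ ℝ) 1) : HasSum (fun s ↦ |u s|) ‖u‖ := by
  simpa using lp.hasSum_norm (p := 1) (by norm_num) u

theorem lp.norm_le_of_support_subsingleton {u : lp (fun _ : S ↦ ℝ) 1}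
    (hu : (support ⇑u).Subsingleton) {C : ℝ} (hC : 0 ≤ C) (huC : ∀ s, |u s| ≤ C) : ‖u‖ ≤ C := by
  rcases hu.eq_empty_or_singleton with h | ⟨s₀, h⟩
  · have : HasSum (fun s ↦ |u s|) 0 := by
      simp [support_eq_empty_iff.1 h]
    exact ((lp.hasSum_abs_one u).unique this).symm ▸ hC
  · have : HasSum (fun s ↦ |u s|) |u s₀| := hasSum_single s₀ fun s hs ↦ by
      simpa using (show s ∉ support ⇑u from h ▸ hs)
    exact ((lp.hasSum_abs_one u).unique this).symm ▸ huC s₀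

theorem exists_continuous_lp_of_locallyFinite {φ : S → X → ℝ} (hφ : ∀ s, Continuous (φ s))
    (hlf : LocallyFinite fun s ↦ support (φ s)) :
    ∃ F : X → lp (fun _ : S ↦ ℝ) 1, Continuous F ∧ ∀ x s, F x s = φ s x := by
  classical
  refine ⟨fun x ↦ ∑ᶠ s, lp.single 1 s (φ s x), continuous_finsum
    (fun s ↦ (lp.isometry_single s).continuous.comp (hφ s)) (hlf.subset fun s x hx ↦ ?_),
    fun x s ↦ ?_⟩
  · exact fun h ↦ hx (by simp [h])
  · have hfin : (support fun s ↦ lp.single (E := fun _ : S ↦ ℝ) 1 s (φ s x)).Finite :=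
      (hlf.point_finite x).subset fun s hs h ↦ hs (by simp [h])
    change lp.evalCLM ℝ _ 1 s _ = _
    rw [map_finsum _ hfin, finsum_eq_single _ s fun s' hs' ↦ ?_]
    · exact lp.single_apply_self 1 s _
    · exact lp.single_apply_ne 1 s' _ hs'.symm

theorem exists_continuous_lp_of_sigmaDiscrete {g : ℕ → S → X → ℝ}
    (hg : ∀ n s, Continuous (g n s)) (hg1 : ∀ n s x, |g n s x| ≤ 1)
    (hdisc : ∀ n, DiscreteFam fun s ↦ support (g n s)) :
    ∃ F : X → lp (fun _ : ℕ × S ↦ ℝ) 1, Continuous F ∧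
      ∀ x p, F x p = 2⁻¹ ^ p.1 * g p.1 p.2 x := by
  classical
  set ψ : ℕ → ℕ × S → X → ℝ := fun n p x ↦ if p.1 = n then 2⁻¹ ^ p.1 * g p.1 p.2 x else 0
  have hψ_ne : ∀ n p x, ψ n p x ≠ 0 → p.1 = n ∧ g n p.2 x ≠ 0 := by
    rintro n ⟨m, s⟩ x hx
    by_cases h : m = n
    · subst h; simp_all [ψ]
    · simp_all [ψ]
  have hψ_disc : ∀ n, DiscreteFam fun p ↦ support (ψ n p) := by
    intro n x
    obtain ⟨N, hN, hsub⟩ := hdisc n x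
    refine ⟨N, hN, (hsub.image (Prod.mk n)).anti ?_⟩
    rintro ⟨m, s⟩ ⟨y, hy, hyN⟩
    obtain ⟨rfl, hgy⟩ := hψ_ne n _ y hy
    exact ⟨s, ⟨y, hgy, hyN⟩, rfl⟩
  have hψ_le : ∀ n p x, |ψ n p x| ≤ 2⁻¹ ^ n := by
    rintro n ⟨m, s⟩ x
    by_cases h : m = n
    · subst h
      simp only [ψ, if_pos rfl, abs_mul, abs_of_pos (by positivity : (0 : ℝ) < 2⁻¹ ^ m)]
      exact mul_le_of_le_one_right (by positivity) (hg1 m s x)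
    · simp [ψ, h]
  choose L hL_cont hL using fun n ↦ exists_continuous_lp_of_locallyFinite
    (fun p ↦ by by_cases h : p.1 = n <;> simp [ψ, h, (hg _ _).const_mul, continuous_const])
    (hψ_disc n).locallyFinite
  have hL_norm : ∀ n x, ‖L n x‖ ≤ 2⁻¹ ^ n := fun n x ↦
    lp.norm_le_of_support_subsingleton ((hψ_disc n).subsingleton_setOf_mem x |>.anti fun p hp ↦
      by simpa [hL] using hp) (by positivity) fun p ↦ hL n x p ▸ hψ_le n p x
  have hsum : Summable fun n : ℕ ↦ (2⁻¹ : ℝ) ^ n :=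
    summable_geometric_of_lt_one (by norm_num) (by norm_num)
  refine ⟨fun x ↦ ∑' n, L n x, continuous_tsum hL_cont hsum hL_norm, fun x p ↦ ?_⟩
  change lp.evalCLM ℝ _ 1 p _ = _
  rw [ContinuousLinearMap.map_tsum _ (hsum.of_norm_bounded (hL_norm · x))]
  simp [lp.evalCLM, hL, ψ]

theorem existsUSmallPU_of_continuous {𝒰 : Set (Set X)}
    {F : X → lp (fun _ : S ↦ ℝ) 1} (hF : Continuous F) (hnonneg : ∀ x s, 0 ≤ F x s)
    (hne : ∀ x, F x ≠ 0) (hsmall : IsUSmall 𝒰 F) : ExistsUSmallPU 𝒰 := by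
  have hnorm : ∀ x, ‖F x‖ ≠ 0 := fun x ↦ norm_ne_zero_iff.2 (hne x)
  refine ⟨S, fun x ↦ ‖F x‖⁻¹ • F x, ⟨(hF.norm.inv₀ hnorm).smul hF, fun x ↦ ⟨fun s ↦ ?_, ?_⟩⟩,
    fun s ↦ ?_⟩
  · exact mul_nonneg (inv_nonneg.2 (norm_nonneg _)) (hnonneg x s)
  · have := ((lp.hasSum_abs_one (F x)).mul_left ‖F x‖⁻¹)
    simpa [inv_mul_cancel₀ (hnorm x), abs_of_nonneg (hnonneg x _)] using this
  · obtain ⟨U, hU, hsub⟩ := hsmall s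
    exact ⟨U, hU, fun x hx ↦ hsub fun h ↦ hx (by simp [h])⟩

theorem IsPU.exists_pointFinite_refinement {𝒰 : Set (Set X)}
    {f : X → lp (fun _ : S ↦ ℝ) 1} (hf : IsPU f) (hsmall : IsUSmall 𝒰 f) :
    ∃ 𝒱 : Set (Set X), IsOpenCover 𝒱 ∧ (∀ V ∈ 𝒱, ∃ U ∈ 𝒰, V ⊆ U) ∧
      ∀ x : X, {V | V ∈ 𝒱 ∧ x ∈ V}.Finite := by
  set m : X → ℝ := fun x ↦ ⨆ s, f x s
  have hm : Continuous m := lipschitzWith_one_iSup_lp.continuous.comp hf.1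
  have hpos : ∀ x, ∃ s, 0 < f x s := fun x ↦ by
    by_contra! h
    have hzero : (fun s ↦ f x s) = 0 := funext fun s ↦ le_antisymm (h s) ((hf.2 x).1 s)
    exact one_ne_zero ((hf.2 x).2.unique (hzero ▸ hasSum_zero))
  have hm_pos : ∀ x, 0 < m x := fun x ↦
    let ⟨s, hs⟩ := hpos x
    hs.trans_le (le_ciSup (bddAbove_range_lp one_ne_zero (f x)) s)
  set V : S → Set X := fun s ↦ {x | m x / 2 < f x s}
  refine ⟨range V, ⟨forall_mem_range.2 fun s ↦ ?_, ?_⟩, forall_mem_range.2 fun s ↦ ?_, fun x ↦ ?_⟩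
  · exact isOpen_lt (hm.div_const 2) ((lp.lipschitzWith_one_eval 1 s).continuous.comp hf.1)
  · refine eq_univ_of_forall fun x ↦ ?_
    have : Nonempty S := ⟨(hpos x).choose⟩
    obtain ⟨s, hs⟩ := exists_lt_of_lt_ciSup (half_lt_self (hm_pos x))
    exact ⟨V s, mem_range_self s, hs⟩
  · obtain ⟨U, hU, hsub⟩ := hsmall s
    exact ⟨U, hU, fun x hx ↦ hsub (ne_of_gt ((half_pos (hm_pos x)).trans hx))⟩
  · refine (((hf.2 x).2.summable.finite_setOf_lt (half_pos (hm_pos x))).image V).subset ?_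
    rintro _ ⟨⟨s, rfl⟩, hx⟩
    exact mem_image_of_mem V hx

end SequenceSpace

/-- A σ-discrete open refinement of `𝒰` together with a closed shrinking that still covers. -/
structure SigmaDiscreteRefinement {X : Type} [TopologicalSpace X] (𝒰 : Set (Set X)) where
  ι : Type
  W : ℕ → ι → Set X
  A : ℕ → ι → Set X
  isOpen_W : ∀ n i, IsOpen (W n i)
  isClosed_A : ∀ n i, IsClosed (A n i)
  A_subset_W : ∀ n i, A n i ⊆ W n i
  discrete : ∀ n, DiscreteFam (W n)
  iUnion_A : ⋃ n, ⋃ i, A n i = univ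
  refines : ∀ n i, ∃ U ∈ 𝒰, W n i ⊆ U

namespace SigmaDiscreteRefinement

variable {X : Type} [TopologicalSpace X] {𝒰 : Set (Set X)}

def coarsen {𝒱 : Set (Set X)} (R : SigmaDiscreteRefinement 𝒱) (h : ∀ V ∈ 𝒱, ∃ U ∈ 𝒰, V ⊆ U) :
    SigmaDiscreteRefinement 𝒰 :=
  { R with
    refines := fun n i ↦
      let ⟨V, hV, hWV⟩ := R.refines n i
      let ⟨U, hU, hVU⟩ := h V hV
      ⟨U, hU, hWV.trans hVU⟩ }

theorem existsUSmallPU [NormalSpace X] (R : SigmaDiscreteRefinement 𝒰) : ExistsUSmallPU 𝒰 := by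
  choose g hg0 hg1 hg01 using fun n i ↦ exists_continuous_zero_one_of_isClosed
    (R.isOpen_W n i).isClosed_compl (R.isClosed_A n i)
    (disjoint_compl_left_iff_subset.2 (R.A_subset_W n i))
  have hgW : ∀ n i, support (g n i) ⊆ R.W n i := fun n i x hx ↦
    not_not.1 fun h ↦ hx (hg0 n i h)
  obtain ⟨F, hF, hFapply⟩ := exists_continuous_lp_of_sigmaDiscrete (fun n i ↦ (g n i).continuous)
    (fun n i x ↦ abs_le.2 ⟨by linarith [(hg01 n i x).1], (hg01 n i x).2⟩)
    fun n ↦ (R.discrete n).mono (hgW n)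
  refine existsUSmallPU_of_continuous hF (fun x p ↦ ?_) (fun x hx ↦ ?_) fun p ↦ ?_
  · rw [hFapply]
    exact mul_nonneg (by positivity) (hg01 _ _ x).1
  · obtain ⟨n, i, hxA⟩ : ∃ n i, x ∈ R.A n i := by
      simpa using R.iUnion_A.ge (mem_univ x)
    have h := hFapply x (n, i)
    rw [hx, hg1 n i hxA, Pi.one_apply, mul_one] at h
    exact pow_ne_zero n (by norm_num) h.symm
  · obtain ⟨U, hU, hWU⟩ := R.refines p.1 p.2
    refine ⟨U, hU, fun x hx ↦ hWU (hgW _ _ ?_)⟩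
    exact right_ne_zero_of_mul ((hFapply x p).symm.trans_ne hx)

end SigmaDiscreteRefinement

section PointFinite

variable {X : Type} {𝒱 : Set (Set X)}

def membersAt (𝒱 : Set (Set X)) (x : X) : Set (Set X) := {V | V ∈ 𝒱 ∧ x ∈ V}

def stratum (𝒱 : Set (Set X)) (n : ℕ) (T : Set (Set X)) : Set X :=
  {z | membersAt 𝒱 z = T ∧ T.ncard = n}

theorem mem_sInter_membersAt (x : X) : x ∈ ⋂₀ membersAt 𝒱 x := fun _ hV ↦ hV.2

theorem membersAt_eq_of_mem_sInter {y z : X} {T : Set (Set X)} (hz : membersAt 𝒱 z = T)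
    (hT : T.Finite) (hzy : z ∈ ⋂₀ membersAt 𝒱 y) (hcard : T.ncard ≤ (membersAt 𝒱 y).ncard) :
    membersAt 𝒱 y = T :=
  eq_of_subset_of_ncard_le (fun V hV ↦ hz ▸ ⟨hV.1, hzy V hV⟩) hcard hT

/-- Outside `G` every point has order `> n`. -/
theorem membersAt_eq_of_inter_stratum_nonempty (hpf : ∀ x, (membersAt 𝒱 x).Finite) {n : ℕ}
    {G : Set X} (hGn : {x | (membersAt 𝒱 x).ncard ≤ n} ⊆ G) {y : X} (hy : y ∉ G)
    {T : Set (Set X)} (hmeet : (⋂₀ membersAt 𝒱 y ∩ (stratum 𝒱 (n + 1) T \ G)).Nonempty) :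
    membersAt 𝒱 y = T := by
  obtain ⟨z, hzy, ⟨hz, hcard⟩, -⟩ := hmeet
  exact membersAt_eq_of_mem_sInter hz (hz ▸ hpf z) hzy
    (hcard.trans_le (Nat.succ_le_of_lt (not_le.1 fun h ↦ hy (hGn h))))

variable [TopologicalSpace X]

theorem isOpen_sInter_membersAt (hVo : ∀ V ∈ 𝒱, IsOpen V) {x : X}
    (hfin : (membersAt 𝒱 x).Finite) : IsOpen (⋂₀ membersAt 𝒱 x) :=
  hfin.isOpen_sInter fun V hV ↦ hVo V hV.1

theorem membersAt_eq_of_mem_closure_stratum (hVo : ∀ V ∈ 𝒱, IsOpen V)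
    (hpf : ∀ x, (membersAt 𝒱 x).Finite) {n : ℕ} {G : Set X} (hG : IsOpen G)
    (hGn : {x | (membersAt 𝒱 x).ncard ≤ n} ⊆ G) {y : X} {T : Set (Set X)}
    (hy : y ∈ closure (stratum 𝒱 (n + 1) T \ G)) : y ∉ G ∧ membersAt 𝒱 y = T := by
  have hyG : y ∉ G := closure_minimal (fun _ hz ↦ hz.2) hG.isClosed_compl hy
  exact ⟨hyG, membersAt_eq_of_inter_stratum_nonempty hpf hGn hyG
    (mem_closure_iff.1 hy _ (isOpen_sInter_membersAt hVo (hpf y)) (mem_sInter_membersAt y))⟩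

theorem discreteFam_closure_stratum (hVo : ∀ V ∈ 𝒱, IsOpen V)
    (hpf : ∀ x, (membersAt 𝒱 x).Finite) {n : ℕ} {G : Set X} (hG : IsOpen G)
    (hGn : {x | (membersAt 𝒱 x).ncard ≤ n} ⊆ G) :
    DiscreteFam fun T ↦ closure (stratum 𝒱 (n + 1) T \ G) := by
  intro x
  by_cases hx : x ∈ G
  · refine ⟨G, hG.mem_nhds hx, fun T ⟨y, hyT, hyG⟩ ↦ ?_⟩
    exact ((membersAt_eq_of_mem_closure_stratum hVo hpf hG hGn hyT).1 hyG).elim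
  · have hN := isOpen_sInter_membersAt hVo (hpf x)
    refine ⟨_, hN.mem_nhds (mem_sInter_membersAt x), fun T ⟨y, hyT, hyN⟩ T' ⟨y', hyT', hyN'⟩ ↦ ?_⟩
    rw [← membersAt_eq_of_inter_stratum_nonempty hpf hGn hx (mem_closure_iff.1 hyT _ hN hyN),
      ← membersAt_eq_of_inter_stratum_nonempty hpf hGn hx (mem_closure_iff.1 hyT' _ hN hyN')]

end PointFinite

section Michael

variable {X : Type} [TopologicalSpace X] {𝒱 : Set (Set X)}

theorem CwNormal.exists_level (hX : CwNormal X) (hVo : ∀ V ∈ 𝒱, IsOpen V)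
    (hpf : ∀ x, (membersAt 𝒱 x).Finite) {n : ℕ} {G : Set X} (hG : IsOpen G)
    (hGn : {x | (membersAt 𝒱 x).ncard ≤ n} ⊆ G) :
    ∃ W A : {T : Set (Set X) // T ⊆ 𝒱 ∧ T.Finite ∧ T.Nonempty} → Set X,
      (∀ i, IsOpen (W i)) ∧ (∀ i, IsClosed (A i)) ∧ (∀ i, A i ⊆ W i) ∧ DiscreteFam W ∧
      (∀ i, ∃ V ∈ 𝒱, W i ⊆ V) ∧
      {x | (membersAt 𝒱 x).ncard ≤ n + 1} ⊆ G ∪ ⋃ i, interior (A i) := by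
  have hCd := (discreteFam_closure_stratum hVo hpf hG hGn).comp_injective
    (Subtype.val_injective (p := fun T : Set (Set X) ↦ T ⊆ 𝒱 ∧ T.Finite ∧ T.Nonempty))
  have hCO : ∀ i : {T : Set (Set X) // T ⊆ 𝒱 ∧ T.Finite ∧ T.Nonempty},
      closure (stratum 𝒱 (n + 1) i.1 \ G) ⊆ ⋂₀ i.1 := fun i y hy V hV ↦
    ((membersAt_eq_of_mem_closure_stratum hVo hpf hG hGn hy).2 ▸ hV).2
  obtain ⟨W, A, hW, hA, hCA, hAW, hWO, hWd⟩ := hX.exists_discrete_shrinking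
    (fun _ ↦ isClosed_closure) hCd (fun i ↦ i.2.2.1.isOpen_sInter fun V hV ↦ hVo V (i.2.1 hV)) hCO
  refine ⟨W, A, hW, hA, hAW, hWd, fun i ↦ ?_, fun x hx ↦ ?_⟩
  · obtain ⟨V, hV⟩ := i.2.2.2
    exact ⟨V, i.2.1 hV, (hWO i).trans (sInter_subset_of_mem hV)⟩
  · by_cases hxG : x ∈ G
    · exact Or.inl hxG
    have hord : (membersAt 𝒱 x).ncard = n + 1 :=
      le_antisymm hx (Nat.succ_le_of_lt (not_le.1 fun h ↦ hxG (hGn h)))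
    have hne : (membersAt 𝒱 x).Nonempty := (ncard_pos (hpf x)).1 (hord ▸ n.succ_pos)
    exact Or.inr (mem_iUnion.2 ⟨⟨membersAt 𝒱 x, fun V hV ↦ hV.1, hpf x, hne⟩,
      hCA _ (subset_closure ⟨⟨rfl, hord⟩, hxG⟩)⟩)

theorem CwNormal.nonempty_sigmaDiscreteRefinement (hX : CwNormal X) (hVo : ∀ V ∈ 𝒱, IsOpen V)
    (hcov : ⋃₀ 𝒱 = univ) (hpf : ∀ x, (membersAt 𝒱 x).Finite) :
    Nonempty (SigmaDiscreteRefinement 𝒱) := by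
  choose! W A hW hA hAW hWd hWV hcover using
    fun n G (hG : IsOpen G) (hGn : {x | (membersAt 𝒱 x).ncard ≤ n} ⊆ G) ↦
      hX.exists_level hVo hpf hG hGn
  -- `G n` is an open neighbourhood of the points of order `≤ n`, covered by the first `n` levels.
  let G : ℕ → Set X := fun n ↦ Nat.rec ∅ (fun n Gn ↦ Gn ∪ ⋃ i, interior (A n Gn i)) n
  have hG : ∀ n, IsOpen (G n) ∧ {x | (membersAt 𝒱 x).ncard ≤ n} ⊆ G n := by
    intro n
    induction n with
    | zero =>
      refine ⟨isOpen_empty, fun x hx ↦ ?_⟩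
      obtain ⟨V, hV, hxV⟩ := hcov.ge (mem_univ x)
      have hV' : V ∈ membersAt 𝒱 x := ⟨hV, hxV⟩
      rw [(ncard_eq_zero (hpf x)).1 (Nat.le_zero.1 hx)] at hV'
      exact hV'.elim
    | succ n ih =>
      exact ⟨ih.1.union (isOpen_iUnion fun _ ↦ isOpen_interior), hcover n (G n) ih.1 ih.2⟩
  have hGA : ∀ n, G n ⊆ ⋃ m, ⋃ i, A m (G m) i := by
    intro n
    induction n with
    | zero => exact empty_subset _
    | succ n ih =>
      exact union_subset ih (iUnion_subset fun i ↦ interior_subset.trans <|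
        subset_iUnion₂ (s := fun m i ↦ A m (G m) i) n i)
  exact ⟨{ ι := _
           W := fun n ↦ W n (G n)
           A := fun n ↦ A n (G n)
           isOpen_W := fun n ↦ hW n _ (hG n).1 (hG n).2
           isClosed_A := fun n ↦ hA n _ (hG n).1 (hG n).2
           A_subset_W := fun n ↦ hAW n _ (hG n).1 (hG n).2
           discrete := fun n ↦ hWd n _ (hG n).1 (hG n).2
           iUnion_A := eq_univ_of_forall fun x ↦ hGA _ ((hG _).2 (le_refl (membersAt 𝒱 x).ncard))
           refines := fun n ↦ hWV n _ (hG n).1 (hG n).2 }⟩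

end Michael

theorem stmt11_general (X : Type) [TopologicalSpace X] (hX : CwNormal X)
    (𝒰 : Set (Set X)) :
    ExistsUSmallPU 𝒰 ↔
      ∃ 𝒱 : Set (Set X), IsOpenCover 𝒱 ∧ (∀ V ∈ 𝒱, ∃ U ∈ 𝒰, V ⊆ U) ∧
        ∀ x : X, {V | V ∈ 𝒱 ∧ x ∈ V}.Finite := by
  constructor
  · rintro ⟨_, f, hf, hsmall⟩
    exact hf.exists_pointFinite_refinement hsmall
  · rintro ⟨𝒱, ⟨hVo, hcov⟩, href, hpf⟩
    have := hX.normalSpace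
    obtain ⟨R⟩ := hX.nonempty_sigmaDiscreteRefinement hVo hcov hpf
    exact (R.coarsen href).existsUSmallPU

/-- In a collectionwise normal space, an open cover admits a small partition of unity iff
it has a point-finite open refinement. -/
theorem stmt11 (X : Type) [TopologicalSpace X] (hX : CwNormal X)
    (𝒰 : Set (Set X)) (hcov : IsOpenCover 𝒰) :
    ExistsUSmallPU 𝒰 ↔
      ∃ 𝒱 : Set (Set X), IsOpenCover 𝒱 ∧ (∀ V ∈ 𝒱, ∃ U ∈ 𝒰, V ⊆ U) ∧
        ∀ x : X, {V | V ∈ 𝒱 ∧ x ∈ V}.Finite :=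
  stmt11_general X hX 𝒰
end
end
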